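/- If X* is sluacs then X is wuacs, and conversely, if X is wuacs then X* is sluacs. -/

import Mathlib

open Filter Topology

/-- A real Banach space is sluacs if for every unit vector y, every sequence (yₙ) in the unit
sphere with ‖yₙ+y‖ → 2 and every sequence (yₙ*) in the dual unit sphere with yₙ*(yₙ) → 1,
one has yₙ*(y) → 1. -/
def IsSluacs (Y : Type*) [NormedAddCommGroup Y] [NormedSpace ℝ Y] : Prop :=
  ∀ (y : Y) (yn : ℕ → Y) (fn : ℕ → StrongDual ℝ Y),
    ‖y‖ = 1 → (∀ n, ‖yn n‖ = 1) → (∀ n, ‖fn n‖ = 1) →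
    Tendsto (fun n => ‖yn n + y‖) atTop (𝓝 2) →
    Tendsto (fun n => fn n (yn n)) atTop (𝓝 1) →
    Tendsto (fun n => fn n y) atTop (𝓝 1)

/-- A real Banach space is wuacs if for any sequences (yₙ), (zₙ) in the unit sphere and every
norm-one functional y*, ‖yₙ+zₙ‖ → 2 and y*(yₙ) → 1 imply y*(zₙ) → 1. -/
def IsWuacs (Y : Type*) [NormedAddCommGroup Y] [NormedSpace ℝ Y] : Prop :=
  ∀ (yn zn : ℕ → Y) (f : StrongDual ℝ Y),
    (∀ n, ‖yn n‖ = 1) → (∀ n, ‖zn n‖ = 1) → ‖f‖ = 1 →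
    Tendsto (fun n => ‖yn n + zn n‖) atTop (𝓝 2) →
    Tendsto (fun n => f (yn n)) atTop (𝓝 1) →
    Tendsto (fun n => f (zn n)) atTop (𝓝 1)

section Helpers

open NormedSpace

variable {X : Type*} [NormedAddCommGroup X] [NormedSpace ℝ X]

private lemma apply_le_mul (g : StrongDual ℝ X) (x : X) : g x ≤ ‖g‖ * ‖x‖ :=
  (le_abs_self _).trans (g.le_opNorm x)

private lemma tendsto_one_of_sum_two {a b : ℕ → ℝ}
    (ha : ∀ᶠ n in atTop, a n ≤ 1) (hb : ∀ᶠ n in atTop, b n ≤ 1)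
    (h : Tendsto (fun n => a n + b n) atTop (𝓝 2)) :
    Tendsto a atTop (𝓝 1) := by
  have hlow : Tendsto (fun n => a n + b n - 1) atTop (𝓝 1) := by
    have := h.sub_const 1
    norm_num at this
    exact this
  refine tendsto_of_tendsto_of_tendsto_of_le_of_le' hlow tendsto_const_nhds ?_ ha
  filter_upwards [hb] with n hn
  linarith

private lemma tendsto_two_squeeze {a b : ℕ → ℝ} (h : Tendsto a atTop (𝓝 2))
    (h1 : ∀ᶠ n in atTop, a n ≤ b n) (h2 : ∀ᶠ n in atTop, b n ≤ 2) :
    Tendsto b atTop (𝓝 2) :=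
  tendsto_of_tendsto_of_tendsto_of_le_of_le' h tendsto_const_nhds h1 h2

private lemma real_exists_dual_vector (x : X) (h : x ≠ 0) :
    ∃ g : StrongDual ℝ X, ‖g‖ = 1 ∧ g x = ‖x‖ := by
  obtain ⟨g, h1, h2⟩ := exists_dual_vector ℝ x (norm_ne_zero_iff.2 h)
  exact ⟨g, h1, by exact_mod_cast h2⟩

private lemma exists_unit_norming (g : StrongDual ℝ X) {c : ℝ} (hc : 0 ≤ c) (h : c < ‖g‖) :
    ∃ x : X, ‖x‖ = 1 ∧ c < g x := by
  obtain ⟨x, hx1, hx2⟩ := g.exists_lt_apply_of_lt_opNorm h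
  rw [Real.norm_eq_abs] at hx2
  set y : X := if 0 ≤ g x then x else -x with hy
  have hgy : g y = |g x| := by
    by_cases h0 : 0 ≤ g x
    · simp [hy, h0, abs_of_nonneg h0]
    · push_neg at h0
      simp [hy, not_le.2 h0, abs_of_neg h0]
  have hyn : ‖y‖ < 1 := by
    by_cases h0 : 0 ≤ g x <;> simp [hy, h0, hx1]
  have hy0 : y ≠ 0 := by
    intro h0
    rw [h0, map_zero] at hgy
    have : |g x| = 0 := hgy.symm
    linarith [lt_of_le_of_lt hc hx2]
  refine ⟨‖y‖⁻¹ • y, ?_, ?_⟩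
  · rw [norm_smul, norm_inv, norm_norm, inv_mul_cancel₀ (norm_ne_zero_iff.2 hy0)]
  · rw [map_smul, smul_eq_mul, hgy]
    have hpos : 0 < ‖y‖ := norm_pos_iff.2 hy0
    have h1 : (1:ℝ) ≤ ‖y‖⁻¹ := by
      rw [le_inv_comm₀ one_pos hpos]
      · simpa using hyn.le
    nlinarith [hx2, lt_of_le_of_lt hc hx2]

private lemma helly2 (F : StrongDual ℝ (StrongDual ℝ X)) (hF : ‖F‖ ≤ 1) (g₁ g₂ : StrongDual ℝ X)
    {ε : ℝ} (hε : 0 < ε) :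
    ∃ x : X, ‖x‖ ≤ 1 ∧ |g₁ x - F g₁| < ε ∧ |g₂ x - F g₂| < ε := by
  set T : X →ₗ[ℝ] ℝ × ℝ := LinearMap.prod (g₁ : X →ₗ[ℝ] ℝ) (g₂ : X →ₗ[ℝ] ℝ) with hT
  have hTx : ∀ x : X, T x = (g₁ x, g₂ x) := fun x => rfl
  set C : Set (ℝ × ℝ) := closure (T '' Metric.closedBall 0 1) with hC
  have hCconv : Convex ℝ C := ((convex_closedBall (0:X) 1).linear_image T).closure
  have hmem : ((F g₁, F g₂) : ℝ × ℝ) ∈ C := by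
    by_contra hnot
    obtain ⟨φ, u, hφ1, hφ2⟩ := geometric_hahn_banach_closed_point hCconv isClosed_closure hnot
    set a := φ (1,0) with ha
    set b := φ (0,1) with hb
    have hφeval : ∀ p : ℝ × ℝ, φ p = p.1 * a + p.2 * b := by
      intro p
      have h : p = p.1 • ((1:ℝ),(0:ℝ)) + p.2 • ((0:ℝ),(1:ℝ)) := by simp [Prod.ext_iff]
      nth_rewrite 1 [h]
      rw [map_add, map_smul, map_smul, smul_eq_mul, smul_eq_mul]
    set g : StrongDual ℝ X := a • g₁ + b • g₂ with hg
    have hgx : ∀ x : X, g x = g₁ x * a + g₂ x * b := by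
      intro x
      simp only [hg, ContinuousLinearMap.add_apply, ContinuousLinearMap.smul_apply,
        smul_eq_mul]
      ring
    have hub : ∀ x : X, ‖x‖ ≤ 1 → g x < u := by
      intro x hx
      have hxC : T x ∈ C := subset_closure ⟨x, by simpa using hx, rfl⟩
      have h2 := hφ1 _ hxC
      rw [hφeval, hTx] at h2
      rw [hgx]
      exact h2
    have hu0 : 0 < u := by
      have := hub 0 (by simp)
      simpa using this
    have hgu : ‖g‖ ≤ u := by
      refine ContinuousLinearMap.opNorm_le_bound _ hu0.le ?_
      intro x
      by_cases hx : x = 0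
      · simp [hx]
      · have hxp : (0:ℝ) < ‖x‖ := norm_pos_iff.2 hx
        have hx1 : ‖(‖x‖⁻¹ • x)‖ = 1 := by
          rw [norm_smul, norm_inv, norm_norm, inv_mul_cancel₀ hxp.ne']
        have h1 := hub _ hx1.le
        have h2 := hub (-(‖x‖⁻¹ • x)) (by rw [norm_neg, hx1])
        rw [map_smul, smul_eq_mul] at h1
        rw [map_neg, map_smul, smul_eq_mul] at h2
        rw [Real.norm_eq_abs, abs_le]
        have key1 : g x < u * ‖x‖ := by
          have h3 := mul_lt_mul_of_pos_left h1 hxp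
          rw [← mul_assoc, mul_inv_cancel₀ hxp.ne', one_mul] at h3
          linarith
        have key2 : -g x < u * ‖x‖ := by
          have h3 := mul_lt_mul_of_pos_left h2 hxp
          rw [mul_neg, ← mul_assoc, mul_inv_cancel₀ hxp.ne', one_mul] at h3
          linarith
        exact ⟨by linarith, key1.le⟩
    have hFu : F g ≤ u := by
      calc F g ≤ ‖F‖ * ‖g‖ := apply_le_mul F g
        _ ≤ 1 * u := mul_le_mul hF hgu (norm_nonneg _) zero_le_one
        _ = u := one_mul u
    have hlt : u < F g := by
      have h2 := hφ2
      rw [hφeval] at h2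
      have hFg : F g = F g₁ * a + F g₂ * b := by
        simp only [hg, map_add, map_smul, smul_eq_mul]
        ring
      rw [hFg]
      exact h2
    linarith
  rw [Metric.mem_closure_iff] at hmem
  obtain ⟨p, hp, hd⟩ := hmem ε hε
  obtain ⟨x, hx, rfl⟩ := hp
  rw [Prod.dist_eq, hTx] at hd
  have h1 := (max_lt_iff.1 hd).1
  have h2 := (max_lt_iff.1 hd).2
  rw [Real.dist_eq] at h1 h2
  refine ⟨x, by simpa using hx, ?_, ?_⟩
  · rwa [abs_sub_comm]
  · rwa [abs_sub_comm]

end Helpers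

theorem dual_sluacs_iff_wuacs (X : Type*) [NormedAddCommGroup X] [NormedSpace ℝ X]
    [CompleteSpace X] :
    IsSluacs (StrongDual ℝ X) ↔ IsWuacs X := by
  constructor
  · -- X* sluacs → X wuacs
    intro hs yn zn f hyn hzn hf hsum hfyn
    classical
    have hy0 : yn 0 ≠ 0 := norm_ne_zero_iff.1 (by rw [hyn 0]; norm_num)
    obtain ⟨g₀, hg₀, -⟩ := real_exists_dual_vector (yn 0) hy0
    have hex : ∀ n, ∃ g : StrongDual ℝ X, ‖g‖ = 1 ∧
        (yn n + zn n ≠ 0 → g (yn n + zn n) = ‖yn n + zn n‖) := by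
      intro n
      by_cases h : yn n + zn n = 0
      · exact ⟨g₀, hg₀, fun hc => absurd h hc⟩
      · obtain ⟨g, hg1, hg2⟩ := real_exists_dual_vector _ h
        exact ⟨g, hg1, fun _ => hg2⟩
    choose fn hfn1 hfn2 using hex
    have hev : ∀ᶠ n in atTop, 1 < ‖yn n + zn n‖ :=
      hsum.eventually (eventually_gt_nhds one_lt_two)
    have hAsum : (fun n => fn n (yn n) + fn n (zn n)) =ᶠ[atTop]
        (fun n => ‖yn n + zn n‖) := by
      filter_upwards [hev] with n hn
      rw [← map_add]
      exact hfn2 n (norm_ne_zero_iff.1 (by linarith))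
    have htend : Tendsto (fun n => fn n (yn n) + fn n (zn n)) atTop (𝓝 2) :=
      Tendsto.congr' hAsum.symm hsum
    have hup1 : ∀ n, fn n (yn n) ≤ 1 := by
      intro n
      have := apply_le_mul (fn n) (yn n)
      rwa [hfn1 n, hyn n, one_mul] at this
    have hup2 : ∀ n, fn n (zn n) ≤ 1 := by
      intro n
      have := apply_le_mul (fn n) (zn n)
      rwa [hfn1 n, hzn n, one_mul] at this
    have ha1 : Tendsto (fun n => fn n (yn n)) atTop (𝓝 1) :=
      tendsto_one_of_sum_two (Eventually.of_forall hup1) (Eventually.of_forall hup2) htend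
    have ha2 : Tendsto (fun n => fn n (zn n)) atTop (𝓝 1) :=
      tendsto_one_of_sum_two (Eventually.of_forall hup2) (Eventually.of_forall hup1)
        (by simpa [add_comm] using htend)
    have hnf : Tendsto (fun n => ‖fn n + f‖) atTop (𝓝 2) := by
      have hlow : Tendsto (fun n => fn n (yn n) + f (yn n)) atTop (𝓝 2) := by
        have := ha1.add hfyn
        norm_num at this
        exact this
      refine tendsto_two_squeeze hlow (Eventually.of_forall fun n => ?_)
        (Eventually.of_forall fun n => ?_)
      · have := apply_le_mul (fn n + f) (yn n)
        rw [hyn n, mul_one] at this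
        simpa [ContinuousLinearMap.add_apply] using this
      · refine (norm_add_le _ _).trans ?_
        rw [hfn1 n, hf]; norm_num
    have key := hs f fn (fun n => NormedSpace.inclusionInDoubleDual ℝ X (zn n)) hf hfn1
      (fun n => by rw [show ‖NormedSpace.inclusionInDoubleDual ℝ X (zn n)‖ = ‖zn n‖ from
        (NormedSpace.inclusionInDoubleDualLi ℝ).norm_map (zn n), hzn n]) hnf ha2
    exact key
  · -- X wuacs → X* sluacs
    intro hw f fn Fn hf hfn hFn hsum hFnfn
    classical
    have hfne : f ≠ 0 := by
      intro h; rw [h] at hf; simp at hf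
    obtain ⟨v, hv⟩ : ∃ v : X, f v ≠ 0 := by
      by_contra h
      push_neg at h
      exact hfne (ContinuousLinearMap.ext fun v => by simp [h v])
    have hv0 : v ≠ 0 := fun h => hv (by simp [h])
    set u : X := ‖v‖⁻¹ • v with hu
    have hu1 : ‖u‖ = 1 := by
      rw [hu, norm_smul, norm_inv, norm_norm,
        inv_mul_cancel₀ (norm_ne_zero_iff.2 hv0)]
    set e : ℕ → ℝ := fun n => ((n:ℝ)+1)⁻¹ with he
    have hepos : ∀ n, 0 < e n := fun n => by positivity
    have he0 : Tendsto e atTop (𝓝 0) := by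
      simpa [he, one_div] using tendsto_one_div_add_atTop_nhds_zero_nat (𝕜 := ℝ)
    -- almost norming unit vectors xn for fn n + f
    have hex : ∀ n, ∃ x : X, ‖x‖ = 1 ∧
        (0 < ‖fn n + f‖ → ‖fn n + f‖ - e n < (fn n + f) x) := by
      intro n
      by_cases h : 0 < ‖fn n + f‖
      · have hclt : max 0 (‖fn n + f‖ - e n) < ‖fn n + f‖ :=
          max_lt h (by linarith [hepos n])
        obtain ⟨x, hx1, hx2⟩ := exists_unit_norming (fn n + f) (le_max_left _ _) hclt
        exact ⟨x, hx1, fun _ => lt_of_le_of_lt (le_max_right _ _) hx2⟩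
      · exact ⟨u, hu1, fun hc => absurd hc h⟩
    choose xn hxn1 hxn2 using hex
    have hposev : ∀ᶠ n in atTop, 1 < ‖fn n + f‖ :=
      hsum.eventually (eventually_gt_nhds one_lt_two)
    have hl2 : Tendsto (fun n => ‖fn n + f‖ - e n) atTop (𝓝 2) := by
      simpa using hsum.sub he0
    have hsq : Tendsto (fun n => (fn n + f) (xn n)) atTop (𝓝 2) := by
      refine tendsto_two_squeeze hl2 ?_ (Eventually.of_forall fun n => ?_)
      · filter_upwards [hposev] with n hn
        exact (hxn2 n (by linarith)).le
      · have h1 := apply_le_mul (fn n + f) (xn n)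
        rw [hxn1 n, mul_one] at h1
        refine h1.trans ((norm_add_le _ _).trans ?_)
        rw [hfn n, hf]; norm_num
    have hsq' : Tendsto (fun n => fn n (xn n) + f (xn n)) atTop (𝓝 2) := by
      simpa [ContinuousLinearMap.add_apply] using hsq
    have hb1 : ∀ n, fn n (xn n) ≤ 1 := by
      intro n
      have := apply_le_mul (fn n) (xn n)
      rwa [hfn n, hxn1 n, one_mul] at this
    have hb2 : ∀ n, f (xn n) ≤ 1 := by
      intro n
      have := apply_le_mul f (xn n)
      rwa [hf, hxn1 n, one_mul] at this
    have hfxn : Tendsto (fun n => fn n (xn n)) atTop (𝓝 1) :=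
      tendsto_one_of_sum_two (Eventually.of_forall hb1) (Eventually.of_forall hb2) hsq'
    have hfxn' : Tendsto (fun n => f (xn n)) atTop (𝓝 1) :=
      tendsto_one_of_sum_two (Eventually.of_forall hb2) (Eventually.of_forall hb1)
        (by simpa [add_comm] using hsq')
    -- wn via Goldstine / Helly
    have hex2 : ∀ n, ∃ w : X, ‖w‖ ≤ 1 ∧ |fn n w - Fn n (fn n)| < e n ∧
        |f w - Fn n f| < e n :=
      fun n => helly2 (Fn n) (le_of_eq (hFn n)) (fn n) f (hepos n)
    choose wn hwn1 hwn2 hwn3 using hex2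
    have hfw : Tendsto (fun n => fn n (wn n)) atTop (𝓝 1) := by
      have hz : Tendsto (fun n => fn n (wn n) - Fn n (fn n)) atTop (𝓝 0) :=
        squeeze_zero_norm (fun n => by
          rw [Real.norm_eq_abs]; exact (hwn2 n).le) he0
      have := hz.add hFnfn
      norm_num at this
      exact this
    have hnw : Tendsto (fun n => ‖wn n‖) atTop (𝓝 1) := by
      refine tendsto_of_tendsto_of_tendsto_of_le_of_le' hfw tendsto_const_nhds
        (Eventually.of_forall fun n => ?_) (Eventually.of_forall hwn1)
      have := apply_le_mul (fn n) (wn n)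
      rwa [hfn n, one_mul] at this
    have hwev : ∀ᶠ n in atTop, wn n ≠ 0 := by
      filter_upwards [hnw.eventually (eventually_gt_nhds one_pos)] with n hn
      exact norm_ne_zero_iff.1 hn.ne'
    set zn : ℕ → X := fun n => if h : wn n = 0 then u else ‖wn n‖⁻¹ • wn n with hzn
    have hzn1 : ∀ n, ‖zn n‖ = 1 := by
      intro n
      rw [hzn]
      by_cases h : wn n = 0
      · simp [h, hu1]
      · simp only [h, dif_neg, not_false_iff]
        rw [norm_smul, norm_inv, norm_norm, inv_mul_cancel₀ (norm_ne_zero_iff.2 h)]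
    have happ : ∀ᶠ n in atTop, ∀ g : StrongDual ℝ X,
        g (zn n) = ‖wn n‖⁻¹ * g (wn n) := by
      filter_upwards [hwev] with n hn g
      rw [hzn]
      simp only [dif_neg hn]
      rw [map_smul, smul_eq_mul]
    have hinv : Tendsto (fun n => ‖wn n‖⁻¹) atTop (𝓝 1) := by
      have := hnw.inv₀ one_ne_zero
      simpa using this
    have hfz : Tendsto (fun n => fn n (zn n)) atTop (𝓝 1) := by
      have h1 : Tendsto (fun n => ‖wn n‖⁻¹ * fn n (wn n)) atTop (𝓝 1) := by
        simpa using hinv.mul hfw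
      refine Tendsto.congr' ?_ h1
      filter_upwards [happ] with n hn
      rw [hn (fn n)]
    have hsum2 : Tendsto (fun n => ‖xn n + zn n‖) atTop (𝓝 2) := by
      have hlow : Tendsto (fun n => fn n (xn n) + fn n (zn n)) atTop (𝓝 2) := by
        have := hfxn.add hfz
        norm_num at this
        exact this
      refine tendsto_two_squeeze hlow (Eventually.of_forall fun n => ?_)
        (Eventually.of_forall fun n => ?_)
      · have h1 := apply_le_mul (fn n) (xn n + zn n)
        rw [hfn n, one_mul, map_add] at h1
        exact h1
      · calc ‖xn n + zn n‖ ≤ ‖xn n‖ + ‖zn n‖ := norm_add_le _ _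
          _ = 2 := by rw [hxn1 n, hzn1 n]; norm_num
    have hfzn : Tendsto (fun n => f (zn n)) atTop (𝓝 1) :=
      hw xn zn f hxn1 hzn1 hf hsum2 hfxn'
    have hfwn : Tendsto (fun n => f (wn n)) atTop (𝓝 1) := by
      have h1 : Tendsto (fun n => ‖wn n‖ * f (zn n)) atTop (𝓝 1) := by
        simpa using hnw.mul hfzn
      refine Tendsto.congr' ?_ h1
      filter_upwards [happ, hwev] with n hg hn
      rw [hg f]
      have : ‖wn n‖ ≠ 0 := norm_ne_zero_iff.2 hn
      field_simp
    have hz2 : Tendsto (fun n => f (wn n) - Fn n f) atTop (𝓝 0) :=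
      squeeze_zero_norm (fun n => by
        rw [Real.norm_eq_abs]; exact (hwn3 n).le) he0
    have hfinal := hfwn.sub hz2
    norm_num at hfinal
    exact hfinal
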